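/- arXiv:2412.08954 — 4 statements merged into one kernel-verified Lean document; each statement's English description precedes it below -/
import Mathlib

section
/- Let A, T be finite sets, p a full-support probability distribution on A, κ a channel from A to T, and {A_j} a partition of A with factored channel κ_π defined by κ_π(t|a) := (∑_{a' ∈ A_j} κ(t|a') p(a')) / p(A_j) for a ∈ A_j. Then the mutual information satisfies I_{κ_π}(A;T) ≤ I_κ(A;T), where the joint distributions are p(a)κ_π(t|a) and p(a)κ(t|a) respectively. Moreover equality holds if and only if κ_π = κ. -/
open Finset
open scoped Classical

/-- Mutual information `I_q(A;T)` for the joint `p(a) q(t|a)`,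
with the convention `0 log (0/x) = 0` (automatic since `Real.log 0 = 0`). -/
noncomputable def MI {A T : Type*} [Fintype A] [Fintype T] (p : A → ℝ) (q : A → T → ℝ) : ℝ :=
  ∑ a, ∑ t, p a * q a t * Real.log (q a t / ∑ a', p a' * q a' t)

/-- The factored channel `κ_π` obtained by averaging `κ` over the fibers of `π`. -/
noncomputable def factored {A T J : Type*} [Fintype A] [Fintype T] (p : A → ℝ)
    (κ : A → T → ℝ) (π : A → J) : A → T → ℝ := fun a t =>
  (∑ a' ∈ Finset.univ.filter fun a' => π a' = π a, κ a' t * p a') /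
  (∑ a' ∈ Finset.univ.filter fun a' => π a' = π a, p a')

/-- Pointwise Gibbs inequality with equality condition. -/
private lemma gibbs_aux {c x y : ℝ} (hc : 0 < c) (hx : 0 ≤ x) (hy : 0 ≤ y)
    (hxy : y = 0 → x = 0) :
    c * (x - y) ≤ c * x * Real.log (x / y) ∧
      (c * x * Real.log (x / y) = c * (x - y) ↔ x = y) := by
  rcases eq_or_lt_of_le hx with h0 | hxpos
  · -- x = 0
    have hx0 : x = 0 := h0.symm
    subst hx0
    simp only [mul_zero, zero_mul, zero_div]
    constructor
    · nlinarith
    · constructor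
      · intro h
        rcases mul_eq_zero.mp h.symm with hc0 | hy0
        · exact absurd hc0 (ne_of_gt hc)
        · linarith
      · intro h; rw [← h]; ring
  · -- 0 < x
    have hy0 : y ≠ 0 := fun h => absurd (hxy h) (ne_of_gt hxpos)
    have hypos : 0 < y := lt_of_le_of_ne hy (Ne.symm hy0)
    have hlog : Real.log (x / y) = - Real.log (y / x) := by
      rw [← Real.log_inv, inv_div]
    have hxy' : x * (y / x - 1) = y - x := by field_simp
    have hle : Real.log (y / x) ≤ y / x - 1 :=
      Real.log_le_sub_one_of_pos (by positivity)
    have h1 : x * Real.log (y / x) ≤ y - x := by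
      calc x * Real.log (y / x) ≤ x * (y / x - 1) :=
            mul_le_mul_of_nonneg_left hle hxpos.le
        _ = y - x := hxy'
    have hmain : c * (x - y) ≤ c * x * Real.log (x / y) := by
      rw [hlog]
      have h2 : c * (x * Real.log (y / x)) ≤ c * (y - x) :=
        mul_le_mul_of_nonneg_left h1 hc.le
      nlinarith
    refine ⟨hmain, ?_, ?_⟩
    · intro heq
      by_contra hne
      have hne' : y / x ≠ 1 :=
        fun h => hne ((div_eq_one_iff_eq (ne_of_gt hxpos)).mp h).symm
      have hlt : Real.log (y / x) < y / x - 1 :=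
        Real.log_lt_sub_one_of_pos (by positivity) hne'
      have h1' : x * Real.log (y / x) < y - x := by
        calc x * Real.log (y / x) < x * (y / x - 1) :=
              mul_lt_mul_of_pos_left hlt hxpos
          _ = y - x := hxy'
      have h2 : c * (x * Real.log (y / x)) < c * (y - x) :=
        mul_lt_mul_of_pos_left h1' hc
      rw [hlog] at heq
      nlinarith
    · intro h
      subst h
      rw [div_self (ne_of_gt hxpos), Real.log_one]
      ring

theorem stmt1 {A T J : Type*} [Fintype A] [Fintype T] [Fintype J]
    (p : A → ℝ) (hp : ∀ a, 0 < p a) (hpsum : ∑ a, p a = 1)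
    (κ : A → T → ℝ) (hκ : ∀ a t, 0 ≤ κ a t) (hκsum : ∀ a, ∑ t, κ a t = 1)
    (π : A → J) (hπ : Function.Surjective π) :
    MI p (factored p κ π) ≤ MI p κ ∧
      (MI p (factored p κ π) = MI p κ ↔ factored p κ π = κ) := by
  classical
  set q : A → T → ℝ := factored p κ π with hqdef
  -- basic facts about fibers
  have hmemself : ∀ a : A, a ∈ Finset.univ.filter fun x => π x = π a := by
    intro a; simp
  have hpA_pos : ∀ a : A, 0 < ∑ a' ∈ Finset.univ.filter (fun x => π x = π a), p a' := by
    intro a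
    exact Finset.sum_pos (fun i _ => hp i) ⟨a, hmemself a⟩
  have hq_const : ∀ a a' : A, π a = π a' → ∀ t, q a t = q a' t := by
    intro a a' h t
    simp only [hqdef, factored, h]
  have hq_nonneg : ∀ a t, 0 ≤ q a t := by
    intro a t
    apply div_nonneg
    · exact Finset.sum_nonneg fun i _ => mul_nonneg (hκ i t) (hp i).le
    · exact (hpA_pos a).le
  have hq_sum : ∀ a, ∑ t, q a t = 1 := by
    intro a
    have hnum : ∑ t, ∑ a' ∈ Finset.univ.filter (fun x => π x = π a), κ a' t * p a'
        = ∑ a' ∈ Finset.univ.filter (fun x => π x = π a), p a' := by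
      rw [Finset.sum_comm]
      refine Finset.sum_congr rfl fun a' _ => ?_
      rw [← Finset.sum_mul, hκsum, one_mul]
    simp only [hqdef, factored]
    rw [← Finset.sum_div, hnum]
    exact div_self (ne_of_gt (hpA_pos a))
  have hq_pos : ∀ a t, 0 < κ a t → 0 < q a t := by
    intro a t hκpos
    apply div_pos _ (hpA_pos a)
    have h1 : κ a t * p a ≤ ∑ a' ∈ Finset.univ.filter (fun x => π x = π a), κ a' t * p a' :=
      Finset.single_le_sum (fun i _ => mul_nonneg (hκ i t) (hp i).le) (hmemself a)
    nlinarith [hp a]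
  have hq_zero : ∀ a t, q a t = 0 → κ a t = 0 := by
    intro a t h
    by_contra hne
    have : 0 < κ a t := lt_of_le_of_ne (hκ a t) (Ne.symm hne)
    exact absurd h (ne_of_gt (hq_pos a t this))
  -- within each fiber, the joint marginals of q and κ agree
  have hfibsum : ∀ (a : A) (t : T),
      ∑ a' ∈ Finset.univ.filter (fun x => π x = π a), p a' * q a' t
        = ∑ a' ∈ Finset.univ.filter (fun x => π x = π a), p a' * κ a' t := by
    intro a t
    have h1 : ∀ a' ∈ Finset.univ.filter (fun x => π x = π a),
        p a' * q a' t = p a' * q a t := by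
      intro a' ha'
      have := (Finset.mem_filter.mp ha').2
      rw [hq_const a' a this t]
    rw [Finset.sum_congr rfl h1, ← Finset.sum_mul]
    have h2 : q a t = (∑ a' ∈ Finset.univ.filter (fun x => π x = π a), κ a' t * p a') /
        (∑ a' ∈ Finset.univ.filter (fun x => π x = π a), p a') := rfl
    rw [h2, mul_div_cancel₀ _ (ne_of_gt (hpA_pos a))]
    exact Finset.sum_congr rfl fun a' _ => mul_comm _ _
  -- bracket lemma: sums against fiber-constant functions vanish
  have hbracket : ∀ (t : T) (g : A → ℝ), (∀ a a', π a = π a' → g a = g a') →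
      ∑ a, p a * (κ a t - q a t) * g a = 0 := by
    intro t g hg
    rw [← Finset.sum_fiberwise Finset.univ π (fun a => p a * (κ a t - q a t) * g a)]
    refine Finset.sum_eq_zero fun j _ => ?_
    rcases (Finset.univ.filter fun a => π a = j).eq_empty_or_nonempty with he | hne
    · rw [he, Finset.sum_empty]
    · obtain ⟨a0, ha0⟩ := hne
      have hj : π a0 = j := (Finset.mem_filter.mp ha0).2
      have hsetj : (Finset.univ.filter fun a => π a = j)
          = Finset.univ.filter fun x => π x = π a0 := by rw [hj]
      rw [hsetj]
      have h1 : ∀ a' ∈ Finset.univ.filter (fun x => π x = π a0),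
          p a' * (κ a' t - q a' t) * g a'
            = (p a' * κ a' t - p a' * q a' t) * g a0 := by
        intro a' ha'
        have hpa : π a' = π a0 := (Finset.mem_filter.mp ha').2
        rw [hg a' a0 hpa]; ring
      rw [Finset.sum_congr rfl h1, ← Finset.sum_mul, Finset.sum_sub_distrib, hfibsum a0 t]
      simp
  -- marginals agree
  have hQ : ∀ t, ∑ a', p a' * q a' t = ∑ a', p a' * κ a' t := by
    intro t
    have h0 := hbracket t (fun _ => 1) (fun _ _ _ => rfl)
    simp only [mul_one] at h0
    have h2 : ∑ a, (p a * κ a t - p a * q a t) = 0 := by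
      rw [← h0]; exact Finset.sum_congr rfl fun a _ => by ring
    rw [Finset.sum_sub_distrib] at h2
    linarith
  have hQ_pos : ∀ a t, 0 < κ a t → 0 < ∑ a', p a' * κ a' t := by
    intro a t h
    have h1 : p a * κ a t ≤ ∑ a', p a' * κ a' t :=
      Finset.single_le_sum (fun i _ => mul_nonneg (hp i).le (hκ i t)) (Finset.mem_univ a)
    nlinarith [hp a]
  set D := ∑ a, ∑ t, p a * κ a t * Real.log (κ a t / q a t) with hDdef
  -- key identity : MI p κ - MI p q = D
  have hMIq : MI p q = ∑ a, ∑ t, p a * q a t * Real.log (q a t / ∑ a', p a' * κ a' t) := by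
    unfold MI
    exact Finset.sum_congr rfl fun a _ => Finset.sum_congr rfl fun t _ => by rw [hQ t]
  have hterm : ∀ a t,
      p a * κ a t * Real.log (κ a t / ∑ a', p a' * κ a' t)
        - p a * q a t * Real.log (q a t / ∑ a', p a' * κ a' t)
      = p a * κ a t * Real.log (κ a t / q a t)
        + p a * (κ a t - q a t) * Real.log (q a t / ∑ a', p a' * κ a' t) := by
    intro a t
    rcases eq_or_lt_of_le (hκ a t) with h0 | hκpos
    · rw [← h0]; ring
    · have hqpos := hq_pos a t hκpos
      have hQpos := hQ_pos a t hκpos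
      rw [Real.log_div (ne_of_gt hκpos) (ne_of_gt hQpos),
        Real.log_div (ne_of_gt hqpos) (ne_of_gt hQpos),
        Real.log_div (ne_of_gt hκpos) (ne_of_gt hqpos)]
      ring
  have hdiff : MI p κ - MI p q = D := by
    rw [hMIq]
    unfold MI
    rw [← Finset.sum_sub_distrib]
    simp only [← Finset.sum_sub_distrib]
    have h1 : ∀ a : A, ∑ t, (p a * κ a t * Real.log (κ a t / ∑ a', p a' * κ a' t)
        - p a * q a t * Real.log (q a t / ∑ a', p a' * κ a' t))
        = ∑ t, (p a * κ a t * Real.log (κ a t / q a t)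
          + p a * (κ a t - q a t) * Real.log (q a t / ∑ a', p a' * κ a' t)) := by
      intro a
      exact Finset.sum_congr rfl fun t _ => hterm a t
    rw [Finset.sum_congr rfl fun a _ => h1 a]
    simp only [Finset.sum_add_distrib]
    rw [hDdef]
    have h2 : ∑ a, ∑ t, p a * (κ a t - q a t) *
        Real.log (q a t / ∑ a', p a' * κ a' t) = 0 := by
      rw [Finset.sum_comm]
      refine Finset.sum_eq_zero fun t _ => ?_
      exact hbracket t (fun a => Real.log (q a t / ∑ a', p a' * κ a' t))
        (fun a a' h => by simp only [hq_const a a' h t])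
    rw [h2, add_zero]
  -- the double sum of the "linear part" vanishes
  have hzero : ∑ a, ∑ t, p a * (κ a t - q a t) = 0 := by
    refine Finset.sum_eq_zero fun a _ => ?_
    have : ∑ t, p a * (κ a t - q a t) = p a * ((∑ t, κ a t) - ∑ t, q a t) := by
      rw [← Finset.mul_sum, Finset.sum_sub_distrib]
    rw [this, hκsum, hq_sum, sub_self, mul_zero]
  have hgibbs : ∀ (a : A) (t : T),
      p a * (κ a t - q a t) ≤ p a * κ a t * Real.log (κ a t / q a t) ∧
        (p a * κ a t * Real.log (κ a t / q a t) = p a * (κ a t - q a t) ↔ κ a t = q a t) :=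
    fun a t => gibbs_aux (hp a) (hκ a t) (hq_nonneg a t) (hq_zero a t)
  have hDge : 0 ≤ D := by
    rw [← hzero]
    exact Finset.sum_le_sum fun a _ =>
      Finset.sum_le_sum fun t _ => (hgibbs a t).1
  have hD_iff : D = 0 ↔ ∀ a t, κ a t = q a t := by
    constructor
    · intro hD0
      intro a t
      have hsum0 : ∑ a, ∑ t, (p a * κ a t * Real.log (κ a t / q a t)
          - p a * (κ a t - q a t)) = 0 := by
        simp only [Finset.sum_sub_distrib]
        rw [← hDdef] at *
        rw [hD0, hzero, sub_zero]
      have houter := (Finset.sum_eq_zero_iff_of_nonneg (fun a _ =>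
        Finset.sum_nonneg fun t _ => sub_nonneg.mpr (hgibbs a t).1)).mp hsum0 a (Finset.mem_univ a)
      have hinner := (Finset.sum_eq_zero_iff_of_nonneg (fun t _ =>
        sub_nonneg.mpr (hgibbs a t).1)).mp houter t (Finset.mem_univ t)
      have heq : p a * κ a t * Real.log (κ a t / q a t) = p a * (κ a t - q a t) := by
        linarith [sub_eq_zero.mp hinner]
      exact ((hgibbs a t).2).mp heq
    · intro h
      rw [hDdef]
      refine Finset.sum_eq_zero fun a _ => Finset.sum_eq_zero fun t _ => ?_
      have := ((hgibbs a t).2).mpr (h a t)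
      rw [this, h a t, sub_self, mul_zero]
  refine ⟨by linarith, ?_, ?_⟩
  · intro h
    have hD0 : D = 0 := by linarith
    have h2 := hD_iff.mp hD0
    funext a t
    exact (h2 a t).symm
  · intro h
    rw [h]
end

section
/- Let A, T be finite sets, p a full-support probability distribution on A, and {A_j}_{j=1,...,n} a partition of A. Let κ be a channel from A to T with quotient channel κ̄(t|j) := (∑_{a ∈ A_j} κ(t|a) p(a))/p(A_j). For t ∈ T with ∑_a p(a)κ(t|a) > 0, let A_t^κ := {a ∈ A : κ(t|a) > 0}. Then κ̄ is congruent (i.e., there exists f : T → {1,...,n} with f ∘ κ̄ equal to the identity channel on {1,...,n}) if and only if for every t with ∑_a p(a)κ(t|a) > 0 there exists j with A_t^κ ⊆ A_j. -/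
open Finset
open scoped Classical

theorem stmt2 {A T : Type*} {n : ℕ} [Fintype A] [Fintype T]
    (p : A → ℝ) (hp : ∀ a, 0 < p a) (hpsum : ∑ a, p a = 1)
    (κ : A → T → ℝ) (hκ : ∀ a t, 0 ≤ κ a t) (hκsum : ∀ a, ∑ t, κ a t = 1)
    (π : A → Fin n) (hπ : Function.Surjective π)
    (κbar : Fin n → T → ℝ)
    (hκbar : ∀ j t, κbar j t =
      (∑ a ∈ Finset.univ.filter fun a => π a = j, κ a t * p a) /
      (∑ a ∈ Finset.univ.filter fun a => π a = j, p a)) :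
    (∃ f : T → Fin n, ∀ j j' : Fin n,
        (∑ t ∈ Finset.univ.filter fun t => f t = j', κbar j t) = if j' = j then 1 else 0)
    ↔ ∀ t : T, 0 < (∑ a, p a * κ a t) →
        ∃ j : Fin n, {a : A | 0 < κ a t} ⊆ {a : A | π a = j} := by
  have hD : ∀ j : Fin n, 0 < ∑ a ∈ Finset.univ.filter fun a => π a = j, p a := by
    intro j
    obtain ⟨a0, ha0⟩ := hπ j
    exact Finset.sum_pos' (fun a _ => (hp a).le) ⟨a0, by simp [ha0], hp a0⟩
  have hnonneg : ∀ j t, 0 ≤ κbar j t := by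
    intro j t
    rw [hκbar]
    exact div_nonneg (Finset.sum_nonneg fun a _ => mul_nonneg (hκ a t) (hp a).le) (hD j).le
  have hzero : ∀ j t, (∀ a, π a = j → κ a t = 0) → κbar j t = 0 := by
    intro j t h
    rw [hκbar, Finset.sum_eq_zero, zero_div]
    intro a ha
    simp only [Finset.mem_filter] at ha
    rw [h a ha.2, zero_mul]
  have hsum1 : ∀ j, ∑ t, κbar j t = 1 := by
    intro j
    have hnum : ∑ t, ∑ a ∈ Finset.univ.filter (fun a => π a = j), κ a t * p a
        = ∑ a ∈ Finset.univ.filter (fun a => π a = j), p a := by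
      rw [Finset.sum_comm]
      apply Finset.sum_congr rfl
      intro a _
      rw [← Finset.sum_mul, hκsum a, one_mul]
    simp only [hκbar]
    rw [← Finset.sum_div, hnum, div_self (hD j).ne']
  constructor
  · rintro ⟨f, hf⟩ t ht
    refine ⟨f t, fun a ha => ?_⟩
    simp only [Set.mem_setOf_eq] at ha ⊢
    by_contra hne
    have hpos : 0 < κbar (π a) t := by
      rw [hκbar]
      apply div_pos _ (hD (π a))
      exact Finset.sum_pos' (fun a' _ => mul_nonneg (hκ a' t) (hp a').le)
        ⟨a, by simp, mul_pos ha (hp a)⟩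
    have h2 := hf (π a) (f t)
    rw [if_neg (fun h => hne h.symm)] at h2
    have := (Finset.sum_eq_zero_iff_of_nonneg
      (fun t' _ => hnonneg (π a) t')).mp h2 t (by simp)
    exact hpos.ne' this
  · intro h
    have hA : Nonempty A := by
      rcases isEmpty_or_nonempty A with hE | hE
      · rw [Finset.univ_eq_empty, Finset.sum_empty] at hpsum; norm_num at hpsum
      · exact hE
    set f : T → Fin n := fun t =>
      if ht : 0 < (∑ a, p a * κ a t) then Classical.choose (h t ht)
      else π (Classical.arbitrary A) with hfdef
    have key : ∀ j t, f t ≠ j → κbar j t = 0 := by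
      intro j t hne
      by_cases ht : 0 < (∑ a, p a * κ a t)
      · have hspec := Classical.choose_spec (h t ht)
        apply hzero
        intro a haj
        by_contra hκa
        have haκ : 0 < κ a t := lt_of_le_of_ne (hκ a t) (Ne.symm hκa)
        have : π a = Classical.choose (h t ht) := hspec haκ
        rw [haj] at this
        apply hne
        rw [hfdef]
        simp only [dif_pos ht]
        exact this.symm
      · have hzt : (∑ a, p a * κ a t) = 0 :=
          le_antisymm (not_lt.mp ht)
            (Finset.sum_nonneg fun a _ => mul_nonneg (hp a).le (hκ a t))
        apply hzero
        intro a _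
        have := (Finset.sum_eq_zero_iff_of_nonneg
          (fun a' _ => mul_nonneg (hp a').le (hκ a' t))).mp hzt a (by simp)
        rcases mul_eq_zero.mp this with h0 | h0
        · exact absurd h0 (hp a).ne'
        · exact h0
    refine ⟨f, fun j j' => ?_⟩
    by_cases hjj : j' = j
    · subst hjj
      rw [if_pos rfl]
      have hsplit := Finset.sum_filter_add_sum_filter_not Finset.univ
        (fun t => f t = j') (κbar j')
      have hrest : ∑ t ∈ Finset.univ.filter (fun t => ¬ f t = j'), κbar j' t = 0 := by
        apply Finset.sum_eq_zero
        intro t ht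
        simp only [Finset.mem_filter] at ht
        exact key j' t ht.2
      rw [hrest, add_zero] at hsplit
      rw [hsplit, hsum1]
    · rw [if_neg hjj]
      apply Finset.sum_eq_zero
      intro t ht
      simp only [Finset.mem_filter] at ht
      exact key j t (ht.2 ▸ hjj)
end

section
/- Let A, T be finite sets, p and p̃ probability distributions on A with p full support and supp(p) ⊆ supp(p̃). Define the partition {A_j} of A by the equivalence a ∼ a' iff p(a) p̃(a') = p(a') p̃(a). Let κ be a channel from A to T with factored channel κ_π(t|a) := (∑_{a' ∈ A_j} κ(t|a') p(a'))/p(A_j) for a ∈ A_j. Then the p̃-pushforwards agree: ∑_a p̃(a) κ_π(t|a) = ∑_a p̃(a) κ(t|a) for all t ∈ T. Consequently D(κ_π·p ‖ κ_π·p̃) = D(κ·p ‖ κ·p̃). -/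
open Finset
open scoped Classical

/-- Kullback–Leibler divergence with the convention `0 log (0/0) = 0`. -/
noncomputable def KL {A : Type*} [Fintype A] (μ ν : A → ℝ) : ℝ :=
  ∑ a, μ a * Real.log (μ a / ν a)

/-- Pushforward of a measure `μ` on `A` through a channel `κ : A → Δ(T)`. -/
noncomputable def push {A T : Type*} [Fintype A] (μ : A → ℝ) (κ : A → T → ℝ) : T → ℝ :=
  fun t => ∑ a, μ a * κ a t

/-- The factored channel associated with the partition of `A` defined by
`a ∼ a' ↔ p(a) p̃(a') = p(a') p̃(a)`. -/
noncomputable def factoredRatio {A T : Type*} [Fintype A] (p ptil : A → ℝ)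
    (κ : A → T → ℝ) : A → T → ℝ := fun a t =>
  (∑ a' ∈ Finset.univ.filter fun a' => p a * ptil a' = p a' * ptil a, κ a' t * p a') /
  (∑ a' ∈ Finset.univ.filter fun a' => p a * ptil a' = p a' * ptil a, p a')

theorem stmt11 {A T : Type*} [Fintype A] [Fintype T]
    (p ptil : A → ℝ)
    (hp : ∀ a, 0 < p a) (hpsum : ∑ a, p a = 1)
    (hptil : ∀ a, 0 ≤ ptil a) (hptilsum : ∑ a, ptil a = 1)
    (hsupp : ∀ a, 0 < p a → 0 < ptil a)
    (κ : A → T → ℝ) (hκ : ∀ a t, 0 ≤ κ a t) (hκsum : ∀ a, ∑ t, κ a t = 1) :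
    (∀ t, ∑ a, ptil a * factoredRatio p ptil κ a t = ∑ a, ptil a * κ a t) ∧
      KL (push p (factoredRatio p ptil κ)) (push ptil (factoredRatio p ptil κ)) =
        KL (push p κ) (push ptil κ) := by
  classical
  have hptilpos : ∀ a, 0 < ptil a := fun a => hsupp a (hp a)
  set r : A → A → Prop := fun a b => p a * ptil b = p b * ptil a with hr
  have hsymm : ∀ a b, r a b → r b a := fun a b h => h.symm
  have htrans : ∀ a b c, r a b → r b c → r a c := by
    intro a b c hab hbc
    have hb : (0:ℝ) < p b * ptil b := mul_pos (hp b) (hptilpos b)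
    simp only [hr] at hab hbc
    have h1 : (p a * ptil c) * (p b * ptil b) = (p c * ptil a) * (p b * ptil b) := by
      linear_combination (p b * ptil c) * hab + (p b * ptil a) * hbc
    exact mul_right_cancel₀ (ne_of_gt hb) h1
  set S : A → Finset A := fun a => univ.filter fun b => r a b with hS
  have hmem : ∀ a b, b ∈ S a ↔ r a b := by intro a b; simp [hS]
  have hself : ∀ a, a ∈ S a := fun a => (hmem a a).2 rfl
  have hSeq : ∀ a b, r a b → S a = S b := by
    intro a b hab; ext c
    simp only [hmem]
    exact ⟨fun h => htrans b a c (hsymm a b hab) h, fun h => htrans a b c hab h⟩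
  set d : A → ℝ := fun a => ∑ b ∈ S a, p b with hd
  have hdpos : ∀ a, 0 < d a :=
    fun a => Finset.sum_pos (fun b _ => hp b) ⟨a, hself a⟩
  have hfr : ∀ a t, factoredRatio p ptil κ a t = (∑ b ∈ S a, κ b t * p b) / d a := by
    intro a t; rfl
  have key : ∀ (w : A → ℝ), (∀ a b, r a b → w a * p b = w b * p a) →
      ∀ t, ∑ a, w a * factoredRatio p ptil κ a t = ∑ a, w a * κ a t := by
    intro w hw t
    have step1 : ∑ a, w a * factoredRatio p ptil κ a t
        = ∑ a, ∑ b ∈ S a, w a * (κ b t * p b) / d a := by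
      refine Finset.sum_congr rfl fun a _ => ?_
      rw [hfr, Finset.sum_div, Finset.mul_sum]
      exact Finset.sum_congr rfl fun b _ => by ring
    rw [step1]
    rw [Finset.sum_comm' (t' := Finset.univ) (s' := fun b => S b)
      (by intro a b; simp only [hmem, Finset.mem_univ, true_and, and_true]
          exact ⟨fun h => hsymm a b h, fun h => hsymm b a h⟩)]
    refine Finset.sum_congr rfl fun b _ => ?_
    have hsum_d : ∀ a ∈ S b, d a = d b := by
      intro a ha
      rw [hd]; simp only
      rw [hSeq a b (hsymm b a ((hmem b a).1 ha))]
    have hsum_w : (∑ a ∈ S b, w a) * p b = w b * d b := by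
      rw [Finset.sum_mul, hd]
      simp only
      rw [Finset.mul_sum]
      refine Finset.sum_congr rfl fun a ha => ?_
      have := hw a b (hsymm b a ((hmem b a).1 ha))
      linarith [this]
    have : ∑ a ∈ S b, w a * (κ b t * p b) / d a
        = ∑ a ∈ S b, w a * (κ b t * p b) / d b := by
      refine Finset.sum_congr rfl fun a ha => by rw [hsum_d a ha]
    rw [this, ← Finset.sum_div, ← Finset.sum_mul]
    have hpb := (hp b).ne'
    have hdb := (hdpos b).ne'
    have hw' : (∑ a ∈ S b, w a) = w b * d b / p b := by
      field_simp
      linarith [hsum_w]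
    rw [hw']
    field_simp
  have hptilkey : ∀ t, ∑ a, ptil a * factoredRatio p ptil κ a t = ∑ a, ptil a * κ a t :=
    key ptil (fun a b hab => by simp only [hr] at hab; linarith [hab])
  have hpkey : ∀ t, ∑ a, p a * factoredRatio p ptil κ a t = ∑ a, p a * κ a t :=
    key p (fun a b _ => mul_comm _ _)
  refine ⟨hptilkey, ?_⟩
  have h1 : push p (factoredRatio p ptil κ) = push p κ := funext fun t => hpkey t
  have h2 : push ptil (factoredRatio p ptil κ) = push ptil κ := funext fun t => hptilkey t
  rw [h1, h2]
end

section
/- Let A, T be finite sets, p and p̃ probability distributions on A with supp(p) =: S and S ⊆ supp(p̃). Fix β ≥ 0 and the Lagrangian L_β(κ) := I_κ(A;T) − β·D(κ·p ‖ κ·p̃). Let κ = q(T|A) be a channel such that q(t|a) = 0 for every a ∈ supp(p̃)∖S and every t with (κ·p)(t) > 0. Let κ' be the channel agreeing with κ on S and sending every a ∈ A∖S to a fixed symbol t₀ with (κ·p)(t₀) = 0. Then L_β(κ') = L_β(κ); and for arbitrary channels κ (without the vanishing condition), L_β(κ') ≤ L_β(κ). -/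
open Finset
open scoped Classical

/-- The DIB Lagrangian `L_β(κ) = I_κ(A;T) − β · D(κ·p ‖ κ·p̃)`. -/
noncomputable def Lag {A T : Type*} [Fintype A] [Fintype T] (p ptil : A → ℝ) (β : ℝ)
    (κ : A → T → ℝ) : ℝ :=
  (∑ a, ∑ t, p a * κ a t * Real.log (κ a t / ∑ a', p a' * κ a' t)) -
    β * ∑ t, (∑ a, p a * κ a t) *
      Real.log ((∑ a, p a * κ a t) / (∑ a, ptil a * κ a t))

theorem stmt18 {A T : Type*} [Fintype A] [Fintype T]
    (p ptil : A → ℝ)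
    (hp : ∀ a, 0 ≤ p a) (hpsum : ∑ a, p a = 1)
    (hptil : ∀ a, 0 ≤ ptil a) (hptilsum : ∑ a, ptil a = 1)
    (hsupp : ∀ a, 0 < p a → 0 < ptil a)
    (β : ℝ) (hβ : 0 ≤ β)
    (κ : A → T → ℝ) (hκ : ∀ a t, 0 ≤ κ a t) (hκsum : ∀ a, ∑ t, κ a t = 1)
    -- `t₀` carries no mass of `κ·p`
    (t₀ : T) (ht₀ : ∑ a, p a * κ a t₀ = 0)
    -- `κ'` agrees with `κ` on the support of `p` and sends `A ∖ supp(p)` to `t₀`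
    (κ' : A → T → ℝ)
    (hκ' : ∀ a t, κ' a t = if 0 < p a then κ a t else (if t = t₀ then 1 else 0)) :
    ((∀ a, 0 < ptil a → p a = 0 → ∀ t, 0 < ∑ a', p a' * κ a' t → κ a t = 0) →
        Lag p ptil β κ' = Lag p ptil β κ) ∧
      Lag p ptil β κ' ≤ Lag p ptil β κ := by
  have hκ'nn : ∀ a t, 0 ≤ κ' a t := by
    intro a t; rw [hκ' a t]
    split_ifs
    · exact hκ a t
    · norm_num
    · norm_num
  have hpκ : ∀ a t, p a * κ' a t = p a * κ a t := by
    intro a t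
    by_cases h : 0 < p a
    · rw [hκ' a t, if_pos h]
    · have h0 : p a = 0 := le_antisymm (not_lt.mp h) (hp a)
      simp [h0]
  have hr : ∀ t, ∑ a, p a * κ' a t = ∑ a, p a * κ a t :=
    fun t => Finset.sum_congr rfl fun a _ => hpκ a t
  have hMI : (∑ a, ∑ t, p a * κ' a t * Real.log (κ' a t / ∑ a', p a' * κ' a' t))
      = ∑ a, ∑ t, p a * κ a t * Real.log (κ a t / ∑ a', p a' * κ a' t) := by
    refine Finset.sum_congr rfl fun a _ => Finset.sum_congr rfl fun t _ => ?_
    by_cases h : 0 < p a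
    · rw [hκ' a t, if_pos h, hr t]
    · have h0 : p a = 0 := le_antisymm (not_lt.mp h) (hp a)
      simp [h0]
  have hrnn : ∀ t, 0 ≤ ∑ a, p a * κ a t :=
    fun t => Finset.sum_nonneg fun a _ => mul_nonneg (hp a) (hκ a t)
  -- for t with positive mass, t ≠ t₀ and the κ' denominator is positive and ≤ the κ one
  have hkey : ∀ t, 0 < ∑ a, p a * κ a t →
      (0 < ∑ a, ptil a * κ' a t ∧ ∑ a, ptil a * κ' a t ≤ ∑ a, ptil a * κ a t
        ∧ t ≠ t₀) := by
    intro t ht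
    have hne : t ≠ t₀ := by
      intro h; rw [h, ht₀] at ht; exact lt_irrefl 0 ht
    obtain ⟨a0, ha0⟩ : ∃ a, 0 < p a * κ a t := by
      by_contra hc
      push_neg at hc
      have : (∑ a, p a * κ a t) ≤ 0 := Finset.sum_nonpos fun a _ => hc a
      linarith
    have hpa0 : 0 < p a0 := by
      rcases (hp a0).lt_or_eq with h | h
      · exact h
      · exfalso; rw [← h] at ha0; simp at ha0
    have hκa0 : 0 < κ a0 t := by
      rcases (hκ a0 t).lt_or_eq with h | h
      · exact h
      · exfalso; rw [← h] at ha0; simp at ha0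
    have hpt0 : 0 < ptil a0 := hsupp a0 hpa0
    refine ⟨?_, ?_, hne⟩
    · have hterm : 0 < ptil a0 * κ' a0 t := by
        rw [hκ' a0 t, if_pos hpa0]; exact mul_pos hpt0 hκa0
      calc 0 < ptil a0 * κ' a0 t := hterm
        _ ≤ ∑ a, ptil a * κ' a t :=
          Finset.single_le_sum (fun a _ => mul_nonneg (hptil a) (hκ'nn a t))
            (Finset.mem_univ a0)
    · refine Finset.sum_le_sum fun a _ => ?_
      by_cases h : 0 < p a
      · rw [hκ' a t, if_pos h]
      · rw [hκ' a t, if_neg h, if_neg hne, mul_zero]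
        exact mul_nonneg (hptil a) (hκ a t)
  -- KL term comparison
  have hD : (∑ t, (∑ a, p a * κ a t) *
        Real.log ((∑ a, p a * κ a t) / (∑ a, ptil a * κ a t)))
      ≤ ∑ t, (∑ a, p a * κ a t) *
        Real.log ((∑ a, p a * κ a t) / (∑ a, ptil a * κ' a t)) := by
    refine Finset.sum_le_sum fun t _ => ?_
    rcases (hrnn t).lt_or_eq with ht | ht
    · obtain ⟨hs'pos, hle, -⟩ := hkey t ht
      have hspos : 0 < ∑ a, ptil a * κ a t := lt_of_lt_of_le hs'pos hle
      refine mul_le_mul_of_nonneg_left ?_ (hrnn t)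
      have h1 : (∑ a, p a * κ a t) / (∑ a, ptil a * κ a t)
          ≤ (∑ a, p a * κ a t) / (∑ a, ptil a * κ' a t) := by
        gcongr
      have h2 : 0 < (∑ a, p a * κ a t) / (∑ a, ptil a * κ a t) :=
        div_pos ht hspos
      exact Real.log_le_log h2 h1
    · rw [← ht]; simp
  -- rewrite the κ' Lagrangian
  have hLag' : Lag p ptil β κ' =
      (∑ a, ∑ t, p a * κ a t * Real.log (κ a t / ∑ a', p a' * κ a' t)) -
        β * ∑ t, (∑ a, p a * κ a t) *
          Real.log ((∑ a, p a * κ a t) / (∑ a, ptil a * κ' a t)) := by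
    unfold Lag
    rw [hMI]
    congr 1
    congr 1
    exact Finset.sum_congr rfl fun t _ => by rw [hr t]
  constructor
  · intro H
    have hDeq : (∑ t, (∑ a, p a * κ a t) *
          Real.log ((∑ a, p a * κ a t) / (∑ a, ptil a * κ' a t)))
        = ∑ t, (∑ a, p a * κ a t) *
          Real.log ((∑ a, p a * κ a t) / (∑ a, ptil a * κ a t)) := by
      refine Finset.sum_congr rfl fun t _ => ?_
      rcases (hrnn t).lt_or_eq with ht | ht
      · obtain ⟨-, -, hne⟩ := hkey t ht
        have hs : (∑ a, ptil a * κ' a t) = ∑ a, ptil a * κ a t := by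
          refine Finset.sum_congr rfl fun a _ => ?_
          by_cases h : 0 < p a
          · rw [hκ' a t, if_pos h]
          · have hp0 : p a = 0 := le_antisymm (not_lt.mp h) (hp a)
            rw [hκ' a t, if_neg h, if_neg hne, mul_zero]
            rcases (hptil a).lt_or_eq with h' | h'
            · rw [H a h' hp0 t ht, mul_zero]
            · rw [← h', zero_mul]
        rw [hs]
      · rw [← ht]; simp
    rw [hLag', hDeq]; rfl
  · rw [hLag']
    unfold Lag
    have := mul_le_mul_of_nonneg_left hD hβ
    linarith
end
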